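/- arXiv:cs/0703133 — 3 statements merged into one kernel-verified Lean document; each statement's English description precedes it below -/
import Mathlib

section
/- Consider the 3-player path graphical game on players U, V, W described in the context. A profile (u,v,w) ∈ [0,1]³ is a Nash equilibrium of this game if and only if v = 1/2 and w = (u+1)/(u+2). In particular, for every u ∈ [0,1] the profile (u, 1/2, (u+1)/(u+2)) is a Nash equilibrium. -/
noncomputable section

/-- Expected payoff to `V` for action 0, given strategies `u` of `U` and `w` of `W`. -/
def P0V (u w : ℝ) : ℝ := -u * w + 3 * w

/-- Expected payoff to `V` for action 1. -/
def P1V (u w : ℝ) : ℝ := P0V u w + w * (u + 2) - (u + 1)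

/-- Nash equilibrium condition for the 3-player path game `U — V — W`:
`U`'s payoff is identically 0 (so its conditions are vacuous), `V`'s payoffs are
`P0V`/`P1V`, and `W` gets 1 iff its action differs from `V`'s action, so `W`'s expected
payoffs are `v` for action 0 and `1 - v` for action 1. -/
def IsNashUVW (u v w : ℝ) : Prop :=
  u ∈ Set.Icc (0:ℝ) 1 ∧ v ∈ Set.Icc (0:ℝ) 1 ∧ w ∈ Set.Icc (0:ℝ) 1 ∧
  (0 < v → P0V u w ≤ P1V u w) ∧ (v < 1 → P1V u w ≤ P0V u w) ∧
  (0 < w → v ≤ 1 - v) ∧ (w < 1 → 1 - v ≤ v)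

lemma nash_aux (u : ℝ) (hu : u ∈ Set.Icc (0:ℝ) 1) :
    IsNashUVW u (1/2) ((u + 1) / (u + 2)) := by
  obtain ⟨hu0, hu1⟩ := hu
  have h2 : (0:ℝ) < u + 2 := by linarith
  have hwpos : 0 < (u + 1) / (u + 2) := by positivity
  have hwlt : (u + 1) / (u + 2) < 1 := by
    rw [div_lt_one h2]; linarith
  have heq : P1V u ((u + 1) / (u + 2)) = P0V u ((u + 1) / (u + 2)) := by
    unfold P1V
    field_simp
    ring
  refine ⟨⟨hu0, hu1⟩, by norm_num, ⟨le_of_lt hwpos, le_of_lt hwlt⟩, ?_, ?_, ?_, ?_⟩ <;>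
    intro _ <;> [exact heq.ge; exact heq.le; norm_num; norm_num]

theorem nash_iff_of_UVW :
    (∀ u v w : ℝ, u ∈ Set.Icc (0:ℝ) 1 → v ∈ Set.Icc (0:ℝ) 1 → w ∈ Set.Icc (0:ℝ) 1 →
      (IsNashUVW u v w ↔ v = 1/2 ∧ w = (u + 1) / (u + 2))) ∧
    (∀ u : ℝ, u ∈ Set.Icc (0:ℝ) 1 → IsNashUVW u (1/2) ((u + 1) / (u + 2))) := by
  constructor
  · intro u v w hu hv hw
    constructor
    · rintro ⟨-, -, ⟨hw0, hw1⟩, h1, h2, h3, h4⟩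
      obtain ⟨hu0, hu1⟩ := hu
      obtain ⟨hv0, hv1⟩ := hv
      have h2u : (0:ℝ) < u + 2 := by linarith
      -- show 0 < v
      have hvpos : 0 < v := by
        rcases eq_or_lt_of_le hv0 with h | h
        · exfalso
          have hw1' : w = 1 := by
            by_contra hne
            have := h4 (lt_of_le_of_ne hw1 hne)
            linarith
          have := h2 (by linarith)
          rw [hw1'] at this
          unfold P1V at this
          linarith
        · exact h
      have hvlt : v < 1 := by
        rcases eq_or_lt_of_le hv1 with h | h
        · exfalso
          have hw0' : w = 0 := by
            by_contra hne
            have := h3 (lt_of_le_of_ne hw0 (Ne.symm hne))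
            linarith
          have := h1 hvpos
          rw [hw0'] at this
          unfold P1V at this
          linarith
        · exact h
      have heq : P1V u w = P0V u w := le_antisymm (h2 hvlt) (h1 hvpos)
      have hwval : w = (u + 1) / (u + 2) := by
        unfold P1V at heq
        field_simp
        linarith
      have hwpos : 0 < w := by
        rw [hwval]; positivity
      have hwlt : w < 1 := by
        rw [hwval, div_lt_one h2u]; linarith
      have hv2 : v = 1/2 := by
        have := h3 hwpos
        have := h4 hwlt
        linarith
      exact ⟨hv2, hwval⟩
    · rintro ⟨rfl, rfl⟩
      exact nash_aux u hu
  · exact nash_aux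
end
end

section
/- Consider the 3-player path graphical game on players U, V, W described in the context. There is a unique Nash equilibrium maximizing the total expected payoff over all Nash equilibria, namely (u,v,w) = (√5 − 2, 1/2, (5−√5)/5), and its total expected payoff equals 13/2 − 2√5. Moreover, both the strategy √5 − 2 and the total payoff 13/2 − 2√5 are irrational. -/
noncomputable section

/-- Total expected payoff of the profile `(u,v,w)`: `U` contributes 0. -/
def totalPayoffUVW (u v w : ℝ) : ℝ :=
  v * P1V u w + (1 - v) * P0V u w + w * (1 - v) + (1 - w) * v

theorem unique_welfare_maximizing_nash :
    IsNashUVW (Real.sqrt 5 - 2) (1/2) ((5 - Real.sqrt 5) / 5) ∧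
    totalPayoffUVW (Real.sqrt 5 - 2) (1/2) ((5 - Real.sqrt 5) / 5)
      = 13/2 - 2 * Real.sqrt 5 ∧
    (∀ u v w : ℝ, IsNashUVW u v w →
      (u, v, w) ≠ (Real.sqrt 5 - 2, 1/2, (5 - Real.sqrt 5) / 5) →
      totalPayoffUVW u v w < 13/2 - 2 * Real.sqrt 5) ∧
    Irrational (Real.sqrt 5 - 2) ∧ Irrational (13/2 - 2 * Real.sqrt 5) := by
  have hs2 : Real.sqrt 5 ^ 2 = 5 := Real.sq_sqrt (by norm_num)
  have hs_lb : (2:ℝ) < Real.sqrt 5 := by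
    nlinarith [Real.sqrt_nonneg 5]
  have hs_ub : Real.sqrt 5 < 3 := by
    nlinarith [Real.sqrt_nonneg 5]
  set s := Real.sqrt 5 with hs
  refine ⟨?_, ?_, ?_, ?_, ?_⟩
  · refine ⟨⟨by linarith, by linarith⟩, ⟨by norm_num, by norm_num⟩,
      ⟨by nlinarith, by nlinarith⟩, ?_, ?_, ?_, ?_⟩ <;> intro h <;>
      (try simp only [P1V, P0V]) <;> nlinarith
  · simp only [totalPayoffUVW, P1V, P0V]; nlinarith
  · rintro u v w ⟨⟨hu0, hu1⟩, ⟨hv0, hv1⟩, ⟨hw0, hw1⟩, h4, h5, h6, h7⟩ hne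
    simp only [P1V, P0V] at h4 h5
    -- w ≠ 0
    have hwpos : 0 < w := by
      rcases hw0.lt_or_eq with h | h; · exact h
      exfalso
      have hv : v = 0 := by
        by_contra hv
        have := h4 (lt_of_le_of_ne hv0 (Ne.symm hv))
        nlinarith
      have := h7 (by linarith)
      linarith
    have hwlt : w < 1 := by
      rcases hw1.lt_or_eq with h | h; · exact h
      exfalso
      have hv : v ≤ 1 - v := h6 hwpos
      have := h5 (by linarith)
      nlinarith
    have hv : v = 1/2 := by
      have h1 := h6 hwpos
      have h2 := h7 hwlt
      linarith
    have hweq : w * (u + 2) = u + 1 := by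
      have h1 := h4 (by rw [hv]; norm_num)
      have h2 := h5 (by rw [hv]; norm_num)
      nlinarith
    have hune : u ≠ s - 2 := by
      intro hu
      apply hne
      have hw5 : w = (5 - s) / 5 := by
        have hs0 : (0:ℝ) < s := by linarith
        have : w * s = s - 1 := by rw [hu] at hweq; linarith
        field_simp
        nlinarith
      rw [hu, hv, hw5]
    have hsq : 0 < (u - (s - 2))^2 := by
      have : u - (s - 2) ≠ 0 := sub_ne_zero.mpr hune
      positivity
    simp only [totalPayoffUVW, P1V, P0V, hv]
    nlinarith [hsq, mul_pos hwpos (sub_pos.mpr hwlt)]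
  · exact ((by norm_num : Nat.Prime 5).irrational_sqrt).sub_intCast 2
  · have h5 : Irrational (Real.sqrt 5) :=
      (by norm_num : Nat.Prime 5).irrational_sqrt
    have := ((h5.ratCast_mul (by norm_num : (2:ℚ) ≠ 0)).ratCast_sub (13/2))
    simpa using this
end
end

section
/- Define the set S ⊆ [0,1]² as follows: (w,v) ∈ S if and only if w, v ∈ [0,1] and there exists u ∈ [0,1] such that, setting P⁰ = uw and P¹ = uw + w − (4/5)u − 1/10, the conditions (v > 0 ⟹ P¹ ≥ P⁰), (v < 1 ⟹ P⁰ ≥ P¹), and v·P¹ + (1−v)·P⁰ ≥ 1/8 all hold. Then S cannot be written as a finite union of sets of the form I × J, where I and J are closed intervals (possibly degenerate) with rational endpoints. -/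
noncomputable section

/-- The best response policy of `V` given `W` with respect to the threshold `1/8`
in the 3-vertex path game `U — V — W` where `U`'s payoff is identically `0` and
`V`'s expected payoffs against strategies `u` of `U` and `w` of `W` are
`P⁰ = u·w` for action 0 and `P¹ = u·w + w − (4/5)·u − 1/10` for action 1.
A pair `(w, v)` belongs to the set iff there is a strategy `u ∈ [0,1]` of `U`
making `v` a best response of `V` to `(u, w)` and giving `V` expected payoff
at least `1/8`. -/
def brpSet : Set (ℝ × ℝ) :=
  {p | p.1 ∈ Set.Icc (0:ℝ) 1 ∧ p.2 ∈ Set.Icc (0:ℝ) 1 ∧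
    ∃ u ∈ Set.Icc (0:ℝ) 1,
      (0 < p.2 → u * p.1 ≤ u * p.1 + p.1 - (4/5) * u - 1/10) ∧
      (p.2 < 1 → u * p.1 + p.1 - (4/5) * u - 1/10 ≤ u * p.1) ∧
      1/8 ≤ p.2 * (u * p.1 + p.1 - (4/5) * u - 1/10) + (1 - p.2) * (u * p.1)}

theorem brpSet_not_finite_union_of_rational_rectangles :
    ¬ ∃ (k : ℕ) (a b c d : Fin k → ℚ),
      brpSet = ⋃ i : Fin k,
        Set.Icc ((a i : ℝ)) ((b i : ℝ)) ×ˢ Set.Icc ((c i : ℝ)) ((d i : ℝ)) := by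
  rintro ⟨k, a, b, c, d, hS⟩
  set s : ℝ := Real.sqrt 41 with hs_def
  have hs2 : s ^ 2 = 41 := Real.sq_sqrt (by norm_num)
  have hs_pos : (0:ℝ) < s := Real.sqrt_pos.mpr (by norm_num)
  have hs6 : (6:ℝ) < s := by nlinarith
  have hs7 : s < 7 := by nlinarith
  set w₀ : ℝ := (1 + s) / 20 with hw₀
  -- w₀ is irrational
  have hirr : Irrational w₀ := by
    have h41 : Irrational s := Nat.Prime.irrational_sqrt (by norm_num)
    have := ((h41.ratCast_add 1).div_natCast (m := 20) (by norm_num))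
    simpa [hw₀] using this
  -- (w₀, 1/2) ∈ brpSet
  have hmem : (w₀, (1:ℝ)/2) ∈ brpSet := by
    refine ⟨⟨by nlinarith, by nlinarith⟩, ⟨by norm_num, by norm_num⟩,
      ⟨(5 * w₀ - 1/2) / 4, ⟨by nlinarith, by nlinarith⟩, ?_, ?_, ?_⟩⟩
    · intro _; nlinarith
    · intro _; nlinarith
    · nlinarith
  rw [hS] at hmem
  simp only [Set.mem_iUnion] at hmem
  obtain ⟨i, hi⟩ := hmem
  obtain ⟨⟨ha, hb⟩, hcd⟩ := hi
  -- the point ((a i : ℝ), 1/2) is also in the rectangle i, hence in brpSet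
  have hmem2 : (((a i : ℝ)), (1:ℝ)/2) ∈ brpSet := by
    rw [hS]
    exact Set.mem_iUnion.mpr ⟨i, ⟨⟨le_refl _, le_trans ha hb⟩, hcd⟩⟩
  -- extract the constraints
  obtain ⟨⟨hw0, hw1⟩, _, u, ⟨hu0, hu1⟩, h1, h2, h3⟩ := hmem2
  have e1 := h1 (by norm_num)
  have e2 := h2 (by norm_num)
  -- w = 4u/5 + 1/10 and u*w ≥ 1/8, hence w ≥ w₀
  have hge : w₀ ≤ (a i : ℝ) := by
    simp only at e1 e2 h3 hw0 hw1
    nlinarith [sq_nonneg (16 * u + 1 - s), sq_nonneg (16 * u + 1 + s)]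
  have heq : ((a i : ℚ) : ℝ) = w₀ := le_antisymm ha hge
  exact Rat.not_irrational (a i) (heq ▸ hirr)
end
end
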